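/- Let p be a prime, l ≥ 2, and q = p^{2l}. The number of pairs (a,b) with a ∈ GF(p^l)*, b ∈ GF(q), satisfying Tr_{p^l/p}(b^{p^l+1}/a) = 0 and such that exactly one of Tr_{p^l/p}(a) and Tr_{q/p}(b) equals 0, is p^{2l−2}(p−1)(2p^{l−1}−1). -/

import Mathlib

/-!
Write `K = {x | x ^ p ^ l = x}` for `GF(p^l)`, `τ` and `T` for the traces of `K` and `F` to `𝔽_p`,
`N b = b ^ (p ^ l + 1)` and `Q_a b = τ (N b / a)`. Every trace `GF(p^r) → 𝔽_p` has all fibres of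
size `p^(r-1)`: its kernel consists of roots of `∑_{i<r} X ^ p ^ i`, and it takes only `p` values.
The norm `N` is `(p^l + 1)`-to-one from `Fˣ` onto `Kˣ`.

If `τ a = 0`, translating `b` by `t • a` with `t ∈ 𝔽_p` fixes `T b` and adds `t * T b` to `Q_a b`,
so on each level set `T = u ≠ 0` the values of `Q_a` are equidistributed over `𝔽_p`: each of the
`p^(l-1) - 1` such `a` has `(p - 1) p^(2l-2)` partners `b`. For `τ a ≠ 0` the partners are the `b`
with `Q_a b = 0 = T b`, counted by subtraction: summed over all `a ∈ Kˣ`, exchanging the sums and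
substituting `a ↦ N b / a` gives `(p^l - 1) + (p^(2l-1) - 1)(p^(l-1) - 1)`, while for `τ a = 0`
the fibres of `N` give `#{b | Q_a b = 0} = 1 + (p^(l-1) - 1)(p^l + 1)`.
-/

open Finset Polynomial

namespace Finset

theorem card_fiber_eq_of_card_fiber_le {α β : Type*} [DecidableEq β] {s : Finset α}
    {t : Finset β} {f : α → β} (hf : Set.MapsTo f s t) {n k : ℕ} (ht : #t ≤ n)
    (hfib : ∀ b ∈ t, #{a ∈ s | f a = b} ≤ k) (hs : #s = n * k) :
    ∀ b ∈ t, #{a ∈ s | f a = b} = k := by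
  refine (sum_eq_sum_iff_of_le hfib).1 (le_antisymm (sum_le_sum hfib) ?_)
  calc ∑ _b ∈ t, k = #t * k := by rw [sum_const, smul_eq_mul]
    _ ≤ n * k := Nat.mul_le_mul_right k ht
    _ = ∑ b ∈ t, #{a ∈ s | f a = b} := by rw [← hs, card_eq_sum_card_fiberwise hf]

theorem card_fiber_eq_of_card_ker_le {G H : Type*} [AddGroup G] [AddGroup H] [DecidableEq G]
    [DecidableEq H] {s : Finset G} (hs : ∀ x ∈ s, ∀ y ∈ s, x - y ∈ s) (g : G →+ H)
    {t : Finset H} (hg : Set.MapsTo g s t) {n k : ℕ} (ht : #t ≤ n)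
    (hker : #{x ∈ s | g x = 0} ≤ k) (hcard : #s = n * k) :
    ∀ z ∈ t, #{x ∈ s | g x = z} = k := by
  refine card_fiber_eq_of_card_fiber_le hg ht (fun z _ => ?_) hcard
  obtain ⟨x₀, hx₀⟩ | hempty := (s.filter (g · = z)).eq_empty_or_nonempty.symm
  · rw [mem_filter] at hx₀
    refine (card_le_card_of_injOn (· - x₀) (fun x hx => ?_) sub_left_injective.injOn).trans hker
    rw [mem_coe, mem_filter] at hx ⊢
    exact ⟨hs x hx.1 x₀ hx₀.1, by rw [map_sub, hx.2, hx₀.2, sub_self]⟩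
  · rw [hempty, card_empty]; exact Nat.zero_le k

end Finset

theorem pow_pow_eq_self {M : Type*} [Monoid M] {t : M} {n : ℕ} (ht : t ^ n = t) (i : ℕ) :
    t ^ n ^ i = t := by
  induction i with
  | zero => rw [pow_zero, pow_one]
  | succ i ih => rw [pow_succ, pow_mul, ih, ht]

theorem ncard_setOf_prod_eq_sum {α β : Type*} [Fintype α] [Fintype β] (P : α × β → Prop)
    [DecidablePred P] : {ab : α × β | P ab}.ncard = ∑ a, #{b : β | P (a, b)} := by
  rw [Set.ncard_eq_toFinset_card', Set.toFinset_ofPred, card_filter, Fintype.sum_prod_type]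
  simp only [card_filter]

theorem card_filter_ne_zero_and_add_one {M : Type*} [Zero M] [Fintype M] [DecidableEq M]
    {P : M → Prop} [DecidablePred P] (h0 : P 0) :
    #{x : M | x ≠ 0 ∧ P x} + 1 = #{x : M | P x} := by
  rw [← card_erase_add_one (mem_filter.2 ⟨mem_univ _, h0⟩), ← filter_ne', filter_filter]
  simp only [and_comm]

theorem card_filter_pow_eq_le {R : Type*} [CommRing R] [IsDomain R] [Fintype R] [DecidableEq R]
    {m : ℕ} (hm : 0 < m) (z : R) : #{x : R | x ^ m = z} ≤ m := by
  calc #{x : R | x ^ m = z} = #(nthRoots m z).toFinset := by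
        congr 1; ext x; simp [mem_nthRoots hm]
    _ ≤ m := (Multiset.toFinset_card_le _).trans (card_nthRoots m z)

section FiniteField

variable {F : Type*} [Field F] [Fintype F]

theorem norm_pow_eq_self {p l : ℕ} (hcard : Fintype.card F = p ^ (2 * l)) (b : F) :
    (b ^ (p ^ l + 1)) ^ p ^ l = b ^ (p ^ l + 1) := by
  rw [← pow_mul, add_one_mul, pow_add, ← pow_add p, ← two_mul, ← hcard, FiniteField.pow_card,
    pow_succ']

variable [DecidableEq F]

theorem card_filter_pow_eq_of_mul_eq {m n : ℕ} (hmn : m * n = Fintype.card F - 1) {y : F}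
    (hy : y ^ n = 1) : #{x : F | x ^ m = y} = m := by
  have hpos : 0 < m * n := hmn ▸ Nat.sub_pos_of_lt Fintype.one_lt_card
  have hm : 0 < m := Nat.pos_of_mul_pos_right hpos
  have hn : 0 < n := Nat.pos_of_mul_pos_left hpos
  have hfiber := Finset.card_fiber_eq_of_card_fiber_le (s := {x : F | x ≠ 0})
    (t := {z : F | z ^ n = 1}) (f := (· ^ m)) (n := n) (k := m)
    (fun x hx => by
      simp only [coe_filter, mem_univ, true_and, Set.mem_ofPred_eq] at hx ⊢
      rw [← pow_mul, hmn, FiniteField.pow_card_sub_one_eq_one x hx])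
    (card_filter_pow_eq_le hn 1)
    (fun z _ => (card_le_card (filter_subset_filter _ (subset_univ _))).trans
      (card_filter_pow_eq_le hm z))
    (by rw [filter_ne', card_erase_of_mem (mem_univ 0), card_univ, ← hmn, mul_comm])
    y (by simpa using hy)
  rwa [filter_filter, filter_congr (q := (· ^ m = y))] at hfiber
  intro x _
  refine ⟨And.right, fun hx => ⟨?_, hx⟩⟩
  rintro rfl
  rw [zero_pow hm.ne'] at hx
  rw [← hx, zero_pow hn.ne'] at hy
  exact zero_ne_one hy

theorem card_filter_pow_eq_self {n : ℕ} (h : n - 1 ∣ Fintype.card F - 1) :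
    #{x : F | x ^ n = x} = n := by
  obtain ⟨k, hk⟩ := h
  have hpos : 0 < (n - 1) * k := hk ▸ Nat.sub_pos_of_lt Fintype.one_lt_card
  have hn : 0 < n - 1 := Nat.pos_of_mul_pos_right hpos
  have hsplit : filter (fun x : F => x ^ n = x) univ =
      insert 0 (filter (fun x : F => x ^ (n - 1) = 1) univ) := by
    ext x
    simp only [mem_filter, mem_univ, true_and, mem_insert]
    rw [← Nat.sub_add_cancel (n := n) (m := 1) (by omega), pow_succ, mul_left_eq_self₀, or_comm,
      Nat.add_sub_cancel]
  rw [hsplit, card_insert_of_notMem (by simp [zero_pow hn.ne']),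
    card_filter_pow_eq_of_mul_eq hk.symm (one_pow k)]
  omega

theorem card_filter_pow_pow_eq_self {p e d : ℕ} (hcard : Fintype.card F = p ^ e) (hd : d ∣ e) :
    #{x : F | x ^ p ^ d = x} = p ^ d :=
  card_filter_pow_eq_self (hcard ▸ Nat.pow_sub_one_dvd_pow_sub_one p hd)

theorem card_filter_pow_char_eq_self {p e : ℕ} (hcard : Fintype.card F = p ^ e) :
    #{x : F | x ^ p = x} = p := by
  simpa using card_filter_pow_pow_eq_self hcard (one_dvd e)

theorem card_filter_eq_zero_and_eq_of_shift {p e : ℕ} (hcard : Fintype.card F = p ^ e)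
    {Q T : F → F} {v : F} (hQ : ∀ b, Q b ^ p = Q b)
    (hshift : ∀ t : F, t ^ p = t → ∀ b, Q (b + t * v) = Q b + t * T b ∧ T (b + t * v) = T b)
    {u : F} (hu0 : u ≠ 0) (hu : u ^ p = u) :
    p * #{b : F | Q b = 0 ∧ T b = u} = #{b : F | T b = u} := by
  have hfiber : ∀ s ∈ ({z : F | z ^ p = z} : Finset F),
      #{b ∈ ({b : F | T b = u} : Finset F) | Q b = s} = #{b : F | Q b = 0 ∧ T b = u} := by
    intro s hs
    have ht : (s / u) ^ p = s / u := by rw [div_pow, (mem_filter.1 hs).2, hu]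
    refine card_nbij' (· - s / u * v) (· + s / u * v) (fun b hb => ?_) (fun b hb => ?_)
      (fun b _ => sub_add_cancel _ _) (fun b _ => add_sub_cancel_right _ _)
    · obtain ⟨hQb, hTb⟩ := hshift _ ht (b - s / u * v)
      rw [sub_add_cancel] at hQb hTb
      simp only [coe_filter, mem_filter, mem_univ, true_and, Set.mem_ofPred_eq] at hb ⊢
      rw [← hTb, hb.1, div_mul_cancel₀ s hu0, hb.2] at hQb
      exact ⟨by simpa using hQb.symm, hTb ▸ hb.1⟩
    · obtain ⟨hQb, hTb⟩ := hshift _ ht b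
      simp only [coe_filter, mem_filter, mem_univ, true_and, Set.mem_ofPred_eq] at hb ⊢
      rw [hQb, hTb, hb.1, hb.2, div_mul_cancel₀ s hu0, zero_add]
      exact ⟨rfl, rfl⟩
  rw [card_eq_sum_card_fiberwise (s := {b : F | T b = u}) (f := Q) (t := {z : F | z ^ p = z})
    (fun b _ => by simpa using hQ b), sum_congr rfl hfiber, sum_const,
    card_filter_pow_char_eq_self hcard, smul_eq_mul]

end FiniteField

section FrobTrace

variable (F : Type*) [CommRing F] (p : ℕ) [ExpChar F p]

/-- On the subfield `{x | x ^ p ^ r = x}`, i.e. `GF(p^r)`, this is the trace `Tr_{p^r/p}`. -/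
def frobTrace (r : ℕ) : F →+ F :=
  ∑ i ∈ range r, (iterateFrobenius F p i).toAddMonoidHom

variable {F p}

theorem frobTrace_apply (r : ℕ) (x : F) : frobTrace F p r x = ∑ i ∈ range r, x ^ p ^ i := by
  simp [frobTrace, iterateFrobenius_def]

theorem frobTrace_add_range (r s : ℕ) (x : F) :
    frobTrace F p (r + s) x = frobTrace F p r x + frobTrace F p s (x ^ p ^ r) := by
  simp only [frobTrace_apply, sum_range_add, ← pow_mul, ← pow_add]

theorem frobTrace_mul_of_pow_eq_self {t : F} (ht : t ^ p = t) (r : ℕ) (x : F) :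
    frobTrace F p r (t * x) = t * frobTrace F p r x := by
  simp only [frobTrace_apply, mul_sum, mul_pow, pow_pow_eq_self ht]

theorem frobTrace_pow_char (r : ℕ) (x : F) : frobTrace F p r x ^ p = frobTrace F p r (x ^ p) := by
  simp only [frobTrace_apply, sum_pow_char, ← pow_mul, ← pow_succ, pow_succ']

theorem frobTrace_one (x : F) : frobTrace F p 1 x = x := by
  rw [frobTrace_apply, sum_range_one, pow_zero, pow_one]

theorem frobTrace_pow_char_of_pow_eq_self {r : ℕ} {x : F} (hx : x ^ p ^ r = x) :
    frobTrace F p r x ^ p = frobTrace F p r x := by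
  have h := frobTrace_add_range (p := p) 1 r x
  rw [add_comm 1 r, frobTrace_add_range, frobTrace_one, frobTrace_one, hx, pow_one] at h
  rw [frobTrace_pow_char]
  linear_combination -h

theorem card_filter_frobTrace_eq_zero_le [IsDomain F] [Fintype F] [DecidableEq F] (hp : 1 < p)
    {r : ℕ} (hr : 0 < r) : #{x : F | frobTrace F p r x = 0} ≤ p ^ (r - 1) := by
  obtain ⟨s, rfl⟩ : ∃ s, r = s + 1 := ⟨r - 1, by omega⟩
  have hlow : degree (∑ i ∈ range s, (X : F[X]) ^ p ^ i) < (p ^ s : ℕ) :=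
    (degree_sum_le _ _).trans_lt <| (Finset.sup_lt_iff (WithBot.bot_lt_coe _)).2 fun i hi => by
      rw [degree_X_pow]; exact_mod_cast Nat.pow_lt_pow_right hp (mem_range.1 hi)
  have hmonic := monic_X_pow_add hlow
  calc #{x : F | frobTrace F p (s + 1) x = 0}
      ≤ (X ^ p ^ s + ∑ i ∈ range s, (X : F[X]) ^ p ^ i).natDegree := by
        refine card_le_degree_of_subset_roots fun x hx => ?_
        rw [mem_roots hmonic.ne_zero, IsRoot, eval_add, eval_finsetSum]
        simp only [eval_pow, eval_X]
        rw [add_comm, ← sum_range_succ, ← frobTrace_apply]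
        exact (mem_filter.1 hx).2
    _ = p ^ (s + 1 - 1) := by
        rw [natDegree_add_eq_left_of_degree_lt (by rwa [degree_X_pow]), natDegree_X_pow,
          Nat.add_sub_cancel]

theorem frobTrace_two_mul_of_pow_eq_self {l : ℕ} {x : F} (hx : x ^ p ^ l = x) :
    frobTrace F p (2 * l) x = 2 * frobTrace F p l x := by
  rw [two_mul, frobTrace_add_range, hx, two_mul]

end FrobTrace

section Trace

variable {F : Type*} [Field F] [Fintype F] {p : ℕ}

theorem frobTrace_pow_char_of_card_eq [ExpChar F p] {e : ℕ} (hcard : Fintype.card F = p ^ e) (x : F) :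
    frobTrace F p e x ^ p = frobTrace F p e x :=
  frobTrace_pow_char_of_pow_eq_self (hcard ▸ FiniteField.pow_card x)

variable [DecidableEq F] [Fact p.Prime] [CharP F p]

theorem card_filter_pow_pow_eq_self_and_frobTrace_eq {e d : ℕ} (hcard : Fintype.card F = p ^ e)
    (hd : d ∣ e) (hd0 : 0 < d) {z : F} (hz : z ^ p = z) :
    #{x : F | x ^ p ^ d = x ∧ frobTrace F p d x = z} = p ^ (d - 1) := by
  have hp : p.Prime := Fact.out
  rw [← filter_filter]
  refine card_fiber_eq_of_card_ker_le (fun x hx y hy => ?_) (frobTrace F p d)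
    (t := {z : F | z ^ p = z}) (fun x hx => ?_) (n := p) ?_ ?_ ?_ z (by simpa)
  · simp only [mem_filter, mem_univ, true_and] at hx hy ⊢
    rw [sub_pow_expChar_pow, hx, hy]
  · simp only [coe_filter, mem_univ, true_and, Set.mem_ofPred_eq] at hx ⊢
    exact frobTrace_pow_char_of_pow_eq_self hx
  · simpa using (card_filter_pow_pow_eq_self (d := 1) hcard (one_dvd e)).le
  · exact (card_le_card (filter_subset_filter _ (filter_subset _ _))).trans
      (card_filter_frobTrace_eq_zero_le hp.one_lt hd0)
  · rw [card_filter_pow_pow_eq_self hcard hd, ← pow_succ', Nat.sub_add_cancel hd0]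

theorem card_filter_frobTrace_eq {e : ℕ} (hcard : Fintype.card F = p ^ e)
    (he : 0 < e) {z : F} (hz : z ^ p = z) : #{x : F | frobTrace F p e x = z} = p ^ (e - 1) := by
  simpa only [← hcard, FiniteField.pow_card, true_and] using
    card_filter_pow_pow_eq_self_and_frobTrace_eq hcard dvd_rfl he hz

end Trace

section Shift

variable {F : Type*} [Field F] {p : ℕ} [ExpChar F p] {l : ℕ}

theorem frobTrace_add_mul_pow_div {a : F} (ha0 : a ≠ 0) (haK : a ^ p ^ l = a) {t : F}
    (ht : t ^ p = t) (b : F) :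
    frobTrace F p l ((b + t * a) ^ (p ^ l + 1) / a) =
      frobTrace F p l (b ^ (p ^ l + 1) / a) + t * frobTrace F p (2 * l) b +
        t ^ 2 * frobTrace F p l a := by
  have hexp : (b + t * a) ^ (p ^ l + 1) / a =
      b ^ (p ^ l + 1) / a + (t * (b + b ^ p ^ l) + t ^ 2 * a) := by
    rw [pow_succ, add_pow_expChar_pow, mul_pow, pow_pow_eq_self ht, haK]
    field_simp
    ring
  have ht2 : (t ^ 2) ^ p = t ^ 2 := by rw [← pow_mul, mul_comm, pow_mul, ht]
  rw [hexp, map_add, map_add, frobTrace_mul_of_pow_eq_self ht, frobTrace_mul_of_pow_eq_self ht2,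
    map_add, two_mul, frobTrace_add_range]
  ring

end Shift

section Count

variable {F : Type*} [Field F] [Fintype F] [DecidableEq F] {p : ℕ} [Fact p.Prime] [CharP F p]
  {l : ℕ}

theorem card_filter_ne_zero_pow_eq_self_frobTrace_eq_zero (hcard : Fintype.card F = p ^ (2 * l))
    (hl : 0 < l) :
    #{u ∈ ({u : F | u ≠ 0 ∧ u ^ p ^ l = u} : Finset F) | frobTrace F p l u = 0} =
      p ^ (l - 1) - 1 := by
  have hp : p.Prime := Fact.out
  have h := card_filter_ne_zero_and_add_one
    (P := fun u : F => u ^ p ^ l = u ∧ frobTrace F p l u = 0)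
    ⟨zero_pow (pow_ne_zero l hp.ne_zero), map_zero _⟩
  rw [card_filter_pow_pow_eq_self_and_frobTrace_eq hcard (Dvd.intro_left 2 rfl) hl
    (zero_pow hp.ne_zero)] at h
  simp only [filter_filter, and_assoc]
  omega

theorem card_filter_frobTrace_div_const_eq_zero (hcard : Fintype.card F = p ^ (2 * l))
    (hl : 0 < l) {a : F} (ha0 : a ≠ 0) (haK : a ^ p ^ l = a) :
    #{c : F | c ≠ 0 ∧ c ^ p ^ l = c ∧ frobTrace F p l (c / a) = 0} = p ^ (l - 1) - 1 := by
  rw [← card_filter_ne_zero_pow_eq_self_frobTrace_eq_zero hcard hl]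
  refine card_nbij' (· / a) (· * a) (fun c hc => ?_) (fun u hu => ?_)
    (fun c _ => div_mul_cancel₀ c ha0) (fun u _ => mul_div_cancel_right₀ u ha0)
  · simp only [coe_filter, mem_filter, mem_univ, true_and, Set.mem_ofPred_eq] at hc ⊢
    exact ⟨⟨div_ne_zero hc.1 ha0, by rw [div_pow, hc.2.1, haK]⟩, hc.2.2⟩
  · simp only [coe_filter, mem_filter, mem_univ, true_and, Set.mem_ofPred_eq] at hu ⊢
    exact ⟨mul_ne_zero hu.1.1 ha0, by rw [mul_pow, hu.1.2, haK], by
      rw [mul_div_cancel_right₀ u ha0]; exact hu.2⟩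

theorem card_filter_frobTrace_const_div_eq_zero (hcard : Fintype.card F = p ^ (2 * l))
    (hl : 0 < l) {c : F} (hc0 : c ≠ 0) (hcK : c ^ p ^ l = c) :
    #{a : F | a ≠ 0 ∧ a ^ p ^ l = a ∧ frobTrace F p l (c / a) = 0} = p ^ (l - 1) - 1 := by
  rw [← card_filter_ne_zero_pow_eq_self_frobTrace_eq_zero hcard hl]
  refine card_nbij' (c / ·) (c / ·) (fun a ha => ?_) (fun u hu => ?_)
    (fun a _ => div_div_cancel₀ hc0) (fun u _ => div_div_cancel₀ hc0)
  · simp only [coe_filter, mem_filter, mem_univ, true_and, Set.mem_ofPred_eq] at ha ⊢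
    exact ⟨⟨div_ne_zero hc0 ha.1, by rw [div_pow, ha.2.1, hcK]⟩, ha.2.2⟩
  · simp only [coe_filter, mem_filter, mem_univ, true_and, Set.mem_ofPred_eq] at hu ⊢
    exact ⟨div_ne_zero hc0 hu.1.1, by rw [div_pow, hu.1.2, hcK], by
      rw [div_div_cancel₀ hc0]; exact hu.2⟩

theorem card_filter_frobTrace_norm_div_eq_zero_and_eq (hcard : Fintype.card F = p ^ (2 * l))
    (hl : 0 < l) {a : F} (ha0 : a ≠ 0) (haK : a ^ p ^ l = a) (haτ : frobTrace F p l a = 0)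
    {u : F} (hu0 : u ≠ 0) (hu : u ^ p = u) :
    #{b : F | frobTrace F p l (b ^ (p ^ l + 1) / a) = 0 ∧ frobTrace F p (2 * l) b = u} =
      p ^ (2 * l - 2) := by
  have hp : p.Prime := Fact.out
  have h := card_filter_eq_zero_and_eq_of_shift hcard
    (Q := fun b => frobTrace F p l (b ^ (p ^ l + 1) / a)) (T := frobTrace F p (2 * l)) (v := a)
    (fun b => frobTrace_pow_char_of_pow_eq_self (by rw [div_pow, norm_pow_eq_self hcard, haK]))
    (fun t ht b => ⟨by rw [frobTrace_add_mul_pow_div ha0 haK ht, haτ, mul_zero, add_zero], by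
      rw [map_add,
        frobTrace_two_mul_of_pow_eq_self (x := t * a) (by rw [mul_pow, pow_pow_eq_self ht, haK]),
        frobTrace_mul_of_pow_eq_self ht, haτ, mul_zero, mul_zero, add_zero]⟩) hu0 hu
  rw [card_filter_frobTrace_eq hcard (by omega) hu,
    show 2 * l - 1 = 2 * l - 2 + 1 by omega, pow_succ'] at h
  exact Nat.eq_of_mul_eq_mul_left hp.pos h

theorem card_filter_frobTrace_norm_div_eq_zero_and_ne_zero (hcard : Fintype.card F = p ^ (2 * l))
    (hl : 0 < l) {a : F} (ha0 : a ≠ 0) (haK : a ^ p ^ l = a) (haτ : frobTrace F p l a = 0) :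
    #{b : F | frobTrace F p l (b ^ (p ^ l + 1) / a) = 0 ∧ frobTrace F p (2 * l) b ≠ 0} =
      (p - 1) * p ^ (2 * l - 2) := by
  have hp : p.Prime := Fact.out
  rw [card_eq_sum_card_fiberwise (f := frobTrace F p (2 * l))
    (t := ({z : F | z ^ p = z} : Finset F).erase 0) fun b hb => by
      simp only [coe_filter, coe_erase, mem_univ, true_and, Set.mem_ofPred_eq, Set.mem_sdiff,
        Set.mem_singleton_iff] at hb ⊢
      exact ⟨frobTrace_pow_char_of_card_eq hcard b, hb.2⟩]
  rw [sum_congr rfl fun u hu => ?_, sum_const, card_erase_of_mem (by simp [hp.ne_zero]),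
    card_filter_pow_char_eq_self hcard, smul_eq_mul]
  rw [mem_erase, mem_filter] at hu
  rw [filter_filter,
    ← card_filter_frobTrace_norm_div_eq_zero_and_eq hcard hl ha0 haK haτ hu.1 hu.2.2]
  congr 1
  refine filter_congr fun b _ => ⟨fun h => ⟨h.1.1, h.2⟩, fun h => ⟨⟨h.1, h.2 ▸ hu.1⟩, h.2⟩⟩

theorem card_filter_frobTrace_norm_div_eq_zero (hcard : Fintype.card F = p ^ (2 * l))
    (hl : 0 < l) {a : F} (ha0 : a ≠ 0) (haK : a ^ p ^ l = a) :
    #{b : F | frobTrace F p l (b ^ (p ^ l + 1) / a) = 0} = (p ^ (l - 1) - 1) * (p ^ l + 1) + 1 := by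
  have hp : p.Prime := Fact.out
  have hq : (p ^ l + 1) * (p ^ l - 1) = Fintype.card F - 1 := by
    rw [hcard, ← Nat.pow_two_sub_pow_two, one_pow, ← pow_mul, mul_comm]
  rw [← card_filter_ne_zero_and_add_one (by simp [zero_pow (Nat.add_one_ne_zero _)]),
    card_eq_sum_card_fiberwise (f := (· ^ (p ^ l + 1)))
      (t := {c : F | c ≠ 0 ∧ c ^ p ^ l = c ∧ frobTrace F p l (c / a) = 0}) fun b hb => by
        simp only [coe_filter, mem_univ, true_and, Set.mem_ofPred_eq] at hb ⊢
        exact ⟨pow_ne_zero _ hb.1, norm_pow_eq_self hcard b, hb.2⟩,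
    sum_congr rfl fun c hc => ?_, sum_const,
    card_filter_frobTrace_div_const_eq_zero hcard hl ha0 haK, smul_eq_mul]
  simp only [mem_filter, mem_univ, true_and] at hc
  have hc1 : c ^ (p ^ l - 1) = 1 := (mul_left_eq_self₀.1 (by
    rw [← pow_succ, Nat.sub_add_cancel (Nat.one_le_pow _ _ hp.pos), hc.2.1])).resolve_right hc.1
  rw [filter_filter]
  refine (congrArg card (filter_congr fun b _ => ⟨And.right, fun hb => ⟨⟨?_, ?_⟩, hb⟩⟩)).trans
    (card_filter_pow_eq_of_mul_eq hq hc1)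
  · rintro rfl
    exact hc.1 (hb ▸ zero_pow (Nat.add_one_ne_zero _))
  · rw [hb]; exact hc.2.2

theorem card_filter_frobTrace_norm_div_eq_zero_and_eq_zero_add
    (hcard : Fintype.card F = p ^ (2 * l)) (hl : 0 < l) {a : F} (ha0 : a ≠ 0)
    (haK : a ^ p ^ l = a) (haτ : frobTrace F p l a = 0) :
    #{b : F | frobTrace F p l (b ^ (p ^ l + 1) / a) = 0 ∧ frobTrace F p (2 * l) b = 0} +
      (p - 1) * p ^ (2 * l - 2) = (p ^ (l - 1) - 1) * (p ^ l + 1) + 1 := by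
  rw [← card_filter_frobTrace_norm_div_eq_zero_and_ne_zero hcard hl ha0 haK haτ,
    ← card_filter_frobTrace_norm_div_eq_zero hcard hl ha0 haK, ← filter_filter,
    ← filter_filter, card_filter_add_card_filter_not]

theorem sum_card_filter_frobTrace_norm_div_eq_zero_and_eq_zero
    (hcard : Fintype.card F = p ^ (2 * l)) (hl : 0 < l) :
    ∑ a ∈ ({a : F | a ≠ 0 ∧ a ^ p ^ l = a} : Finset F),
        #{b : F | frobTrace F p l (b ^ (p ^ l + 1) / a) = 0 ∧ frobTrace F p (2 * l) b = 0} =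
      (p ^ l - 1) + (p ^ (2 * l - 1) - 1) * (p ^ (l - 1) - 1) := by
  have hp : p.Prime := Fact.out
  have hA := card_filter_ne_zero_and_add_one (P := fun a : F => a ^ p ^ l = a)
    (zero_pow (pow_ne_zero l hp.ne_zero))
  rw [card_filter_pow_pow_eq_self hcard (Dvd.intro_left 2 rfl)] at hA
  set A : Finset F := {a : F | a ≠ 0 ∧ a ^ p ^ l = a}
  set T₀ : Finset F := {b : F | frobTrace F p (2 * l) b = 0}
  have hswap := sum_card_bipartiteAbove_eq_sum_card_bipartiteBelow (s := A) (t := T₀)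
    (r := fun a b => frobTrace F p l (b ^ (p ^ l + 1) / a) = 0)
  simp only [bipartiteAbove, bipartiteBelow, T₀, filter_filter] at hswap
  have h0 : (0 : F) ∈ T₀ := mem_filter.2 ⟨mem_univ _, map_zero _⟩
  rw [sum_congr rfl fun a _ => congrArg card (filter_congr fun _ _ => and_comm), hswap,
    ← add_sum_erase _ _ h0]
  congr 1
  · rw [filter_true_of_mem fun a _ => by simp [zero_pow (Nat.add_one_ne_zero _)]]
    omega
  · rw [sum_congr rfl fun b hb => ?_, sum_const, card_erase_of_mem h0,
      card_filter_frobTrace_eq hcard (by omega) (zero_pow hp.ne_zero), smul_eq_mul]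
    rw [filter_filter, ← card_filter_frobTrace_const_div_eq_zero hcard hl
      (pow_ne_zero _ (mem_erase.1 hb).1) (norm_pow_eq_self hcard b)]
    simp only [and_assoc]

theorem sum_card_filter_frobTrace_norm_div_eq_zero_and_xor_eq
    (hcard : Fintype.card F = p ^ (2 * l)) (hl : 0 < l) :
    ∑ a ∈ ({a : F | a ≠ 0 ∧ a ^ p ^ l = a} : Finset F),
        #{b : F | frobTrace F p l (b ^ (p ^ l + 1) / a) = 0 ∧
          (frobTrace F p l a = 0 ∧ frobTrace F p (2 * l) b ≠ 0 ∨
            frobTrace F p l a ≠ 0 ∧ frobTrace F p (2 * l) b = 0)} =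
      (p ^ (l - 1) - 1) * ((p - 1) * p ^ (2 * l - 2)) +
        ∑ a ∈ ({a : F | a ≠ 0 ∧ a ^ p ^ l = a} : Finset F) with ¬frobTrace F p l a = 0,
          #{b : F | frobTrace F p l (b ^ (p ^ l + 1) / a) = 0 ∧ frobTrace F p (2 * l) b = 0} := by
  rw [← sum_filter_add_sum_filter_not _ (frobTrace F p l · = 0)]
  congr 1
  · rw [sum_const_nat fun a ha => ?_, card_filter_ne_zero_pow_eq_self_frobTrace_eq_zero hcard hl]
    simp only [mem_filter, mem_univ, true_and] at ha
    rw [← card_filter_frobTrace_norm_div_eq_zero_and_ne_zero hcard hl ha.1.1 ha.1.2 ha.2]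
    simp only [ha.2, true_and, ne_eq, not_true_eq_false, false_and, or_false]
  · refine sum_congr rfl fun a ha => ?_
    simp only [mem_filter] at ha
    simp only [ha.2, false_and, ne_eq, not_false_eq_true, true_and, false_or]

theorem sum_card_filter_frobTrace_norm_div_eq_zero_and_xor (hcard : Fintype.card F = p ^ (2 * l))
    (hl : 0 < l) :
    ∑ a ∈ ({a : F | a ≠ 0 ∧ a ^ p ^ l = a} : Finset F),
        #{b : F | frobTrace F p l (b ^ (p ^ l + 1) / a) = 0 ∧
          (frobTrace F p l a = 0 ∧ frobTrace F p (2 * l) b ≠ 0 ∨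
            frobTrace F p l a ≠ 0 ∧ frobTrace F p (2 * l) b = 0)} =
      p ^ (2 * l - 2) * (p - 1) * (2 * p ^ (l - 1) - 1) := by
  have hp : p.Prime := Fact.out
  have hS := sum_card_filter_frobTrace_norm_div_eq_zero_and_eq_zero hcard hl
  rw [← sum_filter_add_sum_filter_not _ (frobTrace F p l · = 0)] at hS
  have hM := sum_congr rfl fun a
      (ha : a ∈ filter (frobTrace F p l · = 0) {a : F | a ≠ 0 ∧ a ^ p ^ l = a}) =>
    have haK := (mem_filter.1 (mem_filter.1 ha).1).2
    card_filter_frobTrace_norm_div_eq_zero_and_eq_zero_add hcard hl haK.1 haK.2 (mem_filter.1 ha).2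
  rw [sum_add_distrib, sum_const, sum_const,
    card_filter_ne_zero_pow_eq_self_frobTrace_eq_zero hcard hl, smul_eq_mul, smul_eq_mul] at hM
  rw [sum_card_filter_frobTrace_norm_div_eq_zero_and_xor_eq hcard hl]
  obtain ⟨k, rfl⟩ : ∃ k, l = k + 1 := ⟨l - 1, by omega⟩
  rw [show 2 * (k + 1) - 2 = 2 * k by omega, show 2 * (k + 1) - 1 = 2 * k + 1 by omega,
    Nat.add_sub_cancel] at *
  have h₁ := Nat.one_le_pow k p hp.pos
  have h₂ := Nat.one_le_pow (k + 1) p hp.pos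
  have h₃ := Nat.one_le_pow (2 * k + 1) p hp.pos
  have h₄ : 1 ≤ 2 * p ^ k := by omega
  zify [hp.one_le, h₁, h₂, h₃, h₄] at hS hM ⊢
  linear_combination hS - hM

end Count

theorem stmt6_general (p l : ℕ) (hp : p.Prime) (F : Type*) [Field F] [Fintype F]
    (hcard : Fintype.card F = p ^ (2 * l)) :
    Set.ncard {ab : F × F |
        ab.1 ≠ 0 ∧ ab.1 ^ p ^ l = ab.1 ∧
        (∑ i ∈ Finset.range l, (ab.2 ^ (p ^ l + 1) / ab.1) ^ p ^ i) = 0 ∧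
        (((∑ i ∈ Finset.range l, ab.1 ^ p ^ i) = 0 ∧
            (∑ i ∈ Finset.range (2 * l), ab.2 ^ p ^ i) ≠ 0) ∨
          ((∑ i ∈ Finset.range l, ab.1 ^ p ^ i) ≠ 0 ∧
            (∑ i ∈ Finset.range (2 * l), ab.2 ^ p ^ i) = 0))} =
      p ^ (2 * l - 2) * (p - 1) * (2 * p ^ (l - 1) - 1) := by
  classical
  have := Fact.mk hp
  have := charP_of_card_eq_prime_pow hcard
  have hl : 0 < l := Nat.pos_of_ne_zero fun h =>
    Fintype.one_lt_card.ne' (by rw [hcard, h, mul_zero, pow_zero])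
  simp only [← frobTrace_apply]
  rw [ncard_setOf_prod_eq_sum, ← sum_card_filter_frobTrace_norm_div_eq_zero_and_xor hcard hl,
    sum_filter]
  refine sum_congr rfl fun a _ => ?_
  split_ifs with ha
  · simp only [ha, ne_eq, not_false_eq_true, true_and]
  · rw [card_eq_zero, filter_eq_empty_iff]
    exact fun b _ hb => ha ⟨hb.1, hb.2.1⟩

/-- Let `p` be a prime, `l ≥ 2`, `q = p^{2l}`, and `F = GF(q)`.  The subfield `GF(p^l)` is
identified with `{u : F // u^{p^l} = u}`, `Tr_{p^l/p}(u) = Σ_{i<l} u^{p^i}` and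
`Tr_{q/p}(x) = Σ_{i<2l} x^{p^i}`.  The number of pairs `(a,b)` with `a ∈ GF(p^l)*`,
`b ∈ GF(q)`, satisfying `Tr_{p^l/p}(b^{p^l+1}/a) = 0` and such that exactly one of
`Tr_{p^l/p}(a)` and `Tr_{q/p}(b)` equals `0`, is `p^{2l−2}(p−1)(2p^{l−1}−1)`. -/
theorem stmt6 (p l : ℕ) (hp : p.Prime) (hl : 2 ≤ l) (F : Type*) [Field F] [Fintype F]
    (hcard : Fintype.card F = p ^ (2 * l)) :
    Set.ncard {ab : F × F |
        ab.1 ≠ 0 ∧ ab.1 ^ p ^ l = ab.1 ∧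
        (∑ i ∈ Finset.range l, (ab.2 ^ (p ^ l + 1) / ab.1) ^ p ^ i) = 0 ∧
        (((∑ i ∈ Finset.range l, ab.1 ^ p ^ i) = 0 ∧
            (∑ i ∈ Finset.range (2 * l), ab.2 ^ p ^ i) ≠ 0) ∨
          ((∑ i ∈ Finset.range l, ab.1 ^ p ^ i) ≠ 0 ∧
            (∑ i ∈ Finset.range (2 * l), ab.2 ^ p ^ i) = 0))} =
      p ^ (2 * l - 2) * (p - 1) * (2 * p ^ (l - 1) - 1) :=
  stmt6_general p l hp F hcard
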